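/- For every integer n ≥ 0, the number of UH-free Schröder paths of length 2n having no horizontal step of height greater than 1 equals (1/2)·(1 + ∑_{i=0}^{n} C(2i, i)). -/

import Mathlib

/-- Steps of a Schröder path: `U = (1,1)`, `D = (1,-1)`, `H = H² = (2,0)`. -/
inductive SStep : Type
  | U : SStep
  | D : SStep
  | H : SStep
  deriving DecidableEq

/-- The contribution of a step to the x-coordinate. -/
def SStep.len : SStep → ℕ
  | U => 1
  | D => 1
  | H => 2

/-- The contribution of a step to the y-coordinate. -/
def SStep.eff : SStep → ℤ
  | U => 1
  | D => -1
  | H => 0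

/-- The height (y-coordinate of the starting point) of the `i`-th step (0-indexed);
for `i = L.length` this is the final height of the path. -/
def sHeight (L : List SStep) (i : ℕ) : ℤ := ((L.take i).map SStep.eff).sum

/-- `L` is a Schröder path of length `2 * n`: it has total horizontal displacement `2 * n`,
ends at height `0`, and never goes below the x-axis. -/
def IsSchroder (L : List SStep) (n : ℕ) : Prop :=
  (L.map SStep.len).sum = 2 * n ∧ (L.map SStep.eff).sum = 0 ∧ ∀ i, 0 ≤ sHeight L i

/-- A peak at position `i`: an up step immediately followed by a down step.
The height of this peak is `sHeight L (i+1)`, the height of its down step. -/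
def IsPeakAt (L : List SStep) (i : ℕ) : Prop :=
  L[i]? = some SStep.U ∧ L[i+1]? = some SStep.D

/-- `L` has no peak of odd height. -/
def NoOddPeak (L : List SStep) : Prop :=
  ∀ i, IsPeakAt L i → ¬ Odd (sHeight L (i+1))

/-- `L` has no peak of even height. -/
def NoEvenPeak (L : List SStep) : Prop :=
  ∀ i, IsPeakAt L i → ¬ Even (sHeight L (i+1))

/-- `L` is UH-free: no up step is immediately followed by a horizontal step. -/
def UHFree (L : List SStep) : Prop :=
  ∀ i, ¬ (L[i]? = some SStep.U ∧ L[i+1]? = some SStep.H)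

/-- The number of peaks of `L` of even height greater than `2`. -/
def evenHighPeaks (L : List SStep) : ℕ :=
  ((Finset.range L.length).filter
    (fun i => L[i]? = some SStep.U ∧ L[i+1]? = some SStep.D ∧
      Even (sHeight L (i+1)) ∧ 2 < sHeight L (i+1))).card

/-!
Call `IsLowHPath m h` the UH-free paths from height `h` down to `0` whose horizontal steps all
lie at heights `< m`: Dyck paths are `m = 0` and the paths of the theorem are `m = 2`. Cutting a
path at its first return to the axis writes it as `H·P` or `U·Q·D·P`, where `Q`, read one level
higher, is a path for `m - 1` that does not start with `H`. On generating functions `G_m` by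
semilength this gives `G₀ = 1 + X G₀²`, so `G₀` is the Catalan series `C`, then `X G₁ = C - 1`
and `G₂ (1 - X) (2 - C) = 1`. Since the central binomial series `B` satisfies
`B (1 - 4X) = 1 - 2XC`, also `(1 + B) (2 - C) = 2`, whence `2 (1 - X) G₂ = 1 + B`.
-/

open PowerSeries Finset

lemma Nat.centralBinom_succ_add_two_mul_catalan (n : ℕ) :
    (n + 1).centralBinom + 2 * catalan n = 4 * n.centralBinom := by
  refine Nat.eq_of_mul_eq_mul_left (by omega : 0 < n + 1) ?_
  linear_combination Nat.succ_mul_centralBinom_succ n + 2 * succ_mul_catalan_eq_centralBinom n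

namespace PowerSeries

variable {R : Type*} [CommRing R]

lemma eq_of_eq_one_add_X_mul_sq {φ ψ : R⟦X⟧} (hφ : φ = 1 + X * φ ^ 2)
    (hψ : ψ = 1 + X * ψ ^ 2) : φ = ψ := by
  have hu : IsUnit (1 - X * (φ + ψ)) := isUnit_iff_constantCoeff.2 (by simp)
  refine sub_eq_zero.1 (hu.mul_left_eq_zero.1 ?_)
  linear_combination hφ - hψ

lemma coeff_eq_sum_range_of_mul_one_sub_X {φ ψ : R⟦X⟧} (h : φ * (1 - X) = ψ) (n : ℕ) :
    coeff n φ = ∑ i ∈ range (n + 1), coeff i ψ := by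
  induction n with
  | zero => simp [← h]
  | succ n ih =>
    rw [sum_range_succ, ← ih, ← h, mul_sub, mul_one, map_sub, coeff_succ_mul_X]
    ring

variable (R)

lemma map_catalanSeries_eq_one_add_X_mul_sq :
    catalanSeries.map (Nat.castRingHom R) = 1 + X * catalanSeries.map (Nat.castRingHom R) ^ 2 := by
  have := congrArg (map (Nat.castRingHom R)) catalanSeries_sq_mul_X_add_one
  simp only [map_add, map_mul, map_pow, map_X, map_one] at this
  linear_combination -this

lemma isUnit_two_sub_map_catalanSeries : IsUnit (2 - catalanSeries.map (Nat.castRingHom R)) :=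
  isUnit_iff_constantCoeff.2 (by
    rw [map_sub, map_ofNat, ← coeff_zero_eq_constantCoeff_apply]
    norm_num [coeff_map])

def centralBinomSeries : R⟦X⟧ := mk fun n => (n.centralBinom : R)

lemma centralBinomSeries_mul_one_sub_four_X :
    centralBinomSeries R * (1 - 4 * X) = 1 - 2 * X * catalanSeries.map (Nat.castRingHom R) := by
  suffices h : centralBinomSeries R =
      1 + X * (4 * centralBinomSeries R - 2 * catalanSeries.map (Nat.castRingHom R)) by
    linear_combination h
  ext (_ | n)
  · simp [centralBinomSeries]
  · have := congrArg (Nat.cast : ℕ → R) (Nat.centralBinom_succ_add_two_mul_catalan n)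
    push_cast at this
    rw [map_add, coeff_succ_X_mul, ← map_ofNat C 4, ← map_ofNat C 2]
    simp only [centralBinomSeries, coeff_mk, coeff_one, Nat.add_eq_zero_iff, one_ne_zero,
      and_false, ↓reduceIte, zero_add, map_sub, coeff_C_mul, coeff_map, catalanSeries_coeff,
      eq_natCast]
    linear_combination this

lemma one_add_centralBinomSeries_mul_two_sub_map_catalanSeries :
    (1 + centralBinomSeries R) * (2 - catalanSeries.map (Nat.castRingHom R)) = 2 := by
  have hu : IsUnit (1 - 4 * X : R⟦X⟧) := isUnit_iff_constantCoeff.2 (by simp)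
  refine sub_eq_zero.1 (hu.mul_left_eq_zero.1 ?_)
  linear_combination (2 - catalanSeries.map (Nat.castRingHom R)) *
    centralBinomSeries_mul_one_sub_four_X R - 2 * map_catalanSeries_eq_one_add_X_mul_sq R

end PowerSeries

attribute [simp] SStep.len SStep.eff

instance : Fintype SStep := ⟨{.U, .D, .H}, fun s => by cases s <;> simp⟩

def pathLength (l : List SStep) : ℕ := (l.map SStep.len).sum

@[simp] lemma pathLength_nil : pathLength [] = 0 := rfl

@[simp] lemma pathLength_cons (s : SStep) (l : List SStep) :
    pathLength (s :: l) = s.len + pathLength l := by simp [pathLength]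

@[simp] lemma pathLength_append (l l' : List SStep) :
    pathLength (l ++ l') = pathLength l + pathLength l' := by simp [pathLength]

lemma pathLength_eq_zero {l : List SStep} : pathLength l = 0 ↔ l = [] := by
  cases l with
  | nil => simp
  | cons s l => cases s <;> simp

lemma length_le_pathLength (l : List SStep) : l.length ≤ pathLength l := by
  induction l with
  | nil => simp
  | cons s l ih => cases s <;> simp <;> omega

lemma finite_setOf_pathLength_eq (k : ℕ) : {l : List SStep | pathLength l = k}.Finite :=
  (List.finite_length_le SStep k).subset fun l hl => hl ▸ length_le_pathLength l

def IsLowHPath (m : ℕ) : ℕ → List SStep → Prop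
  | h, [] => h = 0
  | h, .U :: l => l.head? ≠ some .H ∧ IsLowHPath m (h + 1) l
  | h, .D :: l => 0 < h ∧ IsLowHPath m (h - 1) l
  | h, .H :: l => h < m ∧ IsLowHPath m h l

namespace IsLowHPath

variable {m h : ℕ} {l : List SStep}

lemma two_dvd_pathLength_add (hl : IsLowHPath m h l) : 2 ∣ pathLength l + h := by
  induction l generalizing h with
  | nil => simp_all [IsLowHPath]
  | cons s l ih =>
    cases s <;> simp only [IsLowHPath] at hl <;> have := ih hl.2 <;>
      simp only [pathLength_cons, SStep.len] <;> omega

lemma append_D {e a : List SStep} (he : IsLowHPath (m - 1) h e) (ha : IsLowHPath m 0 a) :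
    IsLowHPath m (h + 1) (e ++ .D :: a) := by
  induction e generalizing h with
  | nil => simp_all [IsLowHPath]
  | cons s e ih =>
    cases s <;> simp only [IsLowHPath] at he ⊢
    · refine ⟨?_, ih he.2⟩
      cases e with
      | nil => simp
      | cons t e => exact he.1
    · obtain ⟨hpos, he⟩ := he
      refine ⟨by omega, ?_⟩
      simpa [Nat.sub_add_cancel hpos] using ih he
    · exact ⟨by omega, ih he.2⟩

/-- Cut at the first return to height `h`; the part before it, read one level lower, is `e`. -/
lemma exists_append_D (hl : IsLowHPath m (h + 1) l) :
    ∃ e a, l = e ++ .D :: a ∧ IsLowHPath (m - 1) h e ∧ IsLowHPath m 0 a := by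
  induction l generalizing h with
  | nil => simp [IsLowHPath] at hl
  | cons s l ih =>
    cases s <;> simp only [IsLowHPath] at hl
    · obtain ⟨e, a, rfl, he, ha⟩ := ih hl.2
      refine ⟨.U :: e, a, rfl, ⟨?_, he⟩, ha⟩
      cases e with
      | nil => simp [IsLowHPath] at he
      | cons t e => exact hl.1
    · rcases h with _ | h
      · exact ⟨[], l, rfl, rfl, hl.2⟩
      · obtain ⟨e, a, rfl, he, ha⟩ := ih hl.2
        exact ⟨.D :: e, a, rfl, ⟨by omega, he⟩, ha⟩
    · obtain ⟨e, a, rfl, he, ha⟩ := ih hl.2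
      exact ⟨.H :: e, a, rfl, ⟨by omega, he⟩, ha⟩

lemma of_append {e : List SStep} (he : IsLowHPath m h e) (hel : IsLowHPath m h (e ++ l)) :
    IsLowHPath m 0 l := by
  induction e generalizing h with
  | nil => simp_all [IsLowHPath]
  | cons s e ih => cases s <;> exact ih he.2 hel.2

lemma not_append_D {e c : List SStep} (he : IsLowHPath m 0 e) :
    ¬ IsLowHPath m 0 (e ++ .D :: c) := fun hec => by
  simpa [IsLowHPath] using he.of_append hec

lemma eq_of_append_D {e₁ e₂ a₁ a₂ : List SStep} (he₁ : IsLowHPath m 0 e₁)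
    (he₂ : IsLowHPath m 0 e₂) (heq : e₁ ++ .D :: a₁ = e₂ ++ .D :: a₂) : e₁ = e₂ := by
  rcases List.append_eq_append_iff.1 heq with ⟨c, rfl, hc⟩ | ⟨c, rfl, hc⟩
  · cases c with
    | nil => simp
    | cons t c =>
      obtain ⟨rfl, -⟩ := List.cons.inj hc
      exact absurd he₂ (not_append_D he₁)
  · cases c with
    | nil => simp
    | cons t c =>
      obtain ⟨rfl, -⟩ := List.cons.inj hc
      exact absurd he₁ (not_append_D he₂)

end IsLowHPath

def IsArchInterior (m : ℕ) (l : List SStep) : Prop := IsLowHPath m 0 l ∧ l.head? ≠ some .H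

lemma isArchInterior_zero : IsArchInterior 0 = IsLowHPath 0 0 := by
  ext (_ | ⟨_ | _ | _, l⟩) <;> simp [IsArchInterior, IsLowHPath]

lemma isArchInterior_iff {m : ℕ} {l : List SStep} :
    IsArchInterior m l ↔
      l = [] ∨ ∃ p q, l = .U :: (p ++ .D :: q) ∧ IsArchInterior (m - 1) p ∧ IsLowHPath m 0 q := by
  rcases l with _ | ⟨_ | _ | _, l⟩
  · simp [IsArchInterior, IsLowHPath]
  · simp only [IsArchInterior, IsLowHPath, zero_add]
    constructor
    · rintro ⟨⟨hl, hl1⟩, -⟩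
      obtain ⟨p, q, rfl, hp, hq⟩ := hl1.exists_append_D
      refine Or.inr ⟨p, q, rfl, ⟨hp, ?_⟩, hq⟩
      cases p <;> simp_all
    · rintro (h | ⟨p, q, h, ⟨hp, hp'⟩, hq⟩)
      · simp at h
      · obtain rfl := (List.cons.inj h).2
        refine ⟨⟨?_, hp.append_D hq⟩, by simp⟩
        cases p <;> simp_all
  · simp [IsArchInterior, IsLowHPath]
  · simp [IsArchInterior]

lemma isLowHPath_zero_iff {m : ℕ} {l : List SStep} :
    IsLowHPath (m + 1) 0 l ↔
      IsArchInterior (m + 1) l ∨ ∃ t, l = .H :: t ∧ IsLowHPath (m + 1) 0 t := by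
  rcases l with _ | ⟨_ | _ | _, l⟩ <;> simp [IsArchInterior, IsLowHPath]

noncomputable def pathsWith (P : List SStep → Prop) (n : ℕ) : Finset (List SStep) :=
  Set.Finite.toFinset (s := {l | P l ∧ pathLength l = 2 * n})
    ((finite_setOf_pathLength_eq (2 * n)).subset fun _ hl => hl.2)

@[simp] lemma mem_pathsWith {P : List SStep → Prop} {n : ℕ} {l : List SStep} :
    l ∈ pathsWith P n ↔ P l ∧ pathLength l = 2 * n :=
  Set.Finite.mem_toFinset _

noncomputable def pathSeries (P : List SStep → Prop) : ℚ⟦X⟧ := mk fun n => #(pathsWith P n)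

section pathSeries

variable {P Q : List SStep → Prop}

lemma pathSeries_congr (h : ∀ l, P l ↔ Q l) : pathSeries P = pathSeries Q :=
  congrArg pathSeries (funext fun l => propext (h l))

lemma pathSeries_or (h : ∀ l, P l → ¬ Q l) :
    pathSeries (fun l => P l ∨ Q l) = pathSeries P + pathSeries Q := by
  ext n
  have hunion : pathsWith (fun l => P l ∨ Q l) n = pathsWith P n ∪ pathsWith Q n := by
    ext l; simp [or_and_right]
  have hdisj : Disjoint (pathsWith P n) (pathsWith Q n) :=
    disjoint_left.2 fun l hP hQ => h l (mem_pathsWith.1 hP).1 (mem_pathsWith.1 hQ).1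
  simp [pathSeries, hunion, card_union_of_disjoint hdisj]

lemma pathsWith_zero_eq_empty (h : ∀ l, P l → l ≠ []) : pathsWith P 0 = ∅ := by
  ext l
  simpa [pathLength_eq_zero] using fun hl hl0 => h l hl hl0

lemma pathSeries_eq_nil : pathSeries (· = []) = 1 := by
  ext (_ | n)
  · have : pathsWith (· = []) 0 = {[]} := by ext l; simp +contextual
    simp [pathSeries, this]
  · have : pathsWith (· = []) (n + 1) = ∅ := by ext l; simp +contextual
    simp [pathSeries, this]

lemma pathSeries_cons_H : pathSeries (fun l => ∃ t, l = .H :: t ∧ P t) = X * pathSeries P := by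
  ext (_ | n)
  · rw [coeff_zero_X_mul, pathSeries, coeff_mk,
      pathsWith_zero_eq_empty (by rintro _ ⟨_, rfl, -⟩; simp), card_empty, Nat.cast_zero]
  · have : pathsWith (fun l => ∃ t, l = .H :: t ∧ P t) (n + 1) =
        (pathsWith P n).map ⟨(.H :: ·), List.cons_injective⟩ := by
      ext l; simp only [mem_pathsWith, mem_map, Function.Embedding.coeFn_mk]
      constructor
      · rintro ⟨⟨t, rfl, ht⟩, hl⟩
        simp only [pathLength_cons, SStep.len] at hl
        exact ⟨t, ⟨ht, by omega⟩, rfl⟩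
      · rintro ⟨t, ⟨ht, hl⟩, rfl⟩
        exact ⟨⟨t, rfl, ht⟩, by simp only [pathLength_cons, SStep.len]; omega⟩
    simp [pathSeries, this, coeff_succ_X_mul]

lemma card_pathsWith_arch (hP : ∀ p, P p → 2 ∣ pathLength p) (hQ : ∀ q, Q q → 2 ∣ pathLength q)
    (hinj : ∀ p₁ p₂ q₁ q₂, P p₁ → P p₂ → p₁ ++ .D :: q₁ = p₂ ++ .D :: q₂ → p₁ = p₂) (n : ℕ) :
    #(pathsWith (fun l => ∃ p q, l = .U :: (p ++ .D :: q) ∧ P p ∧ Q q) (n + 1)) =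
      ∑ x ∈ antidiagonal n, #(pathsWith P x.1) * #(pathsWith Q x.2) := by
  simp_rw [← card_product, ← card_sigma]
  symm
  refine card_nbij (fun x => .U :: (x.2.1 ++ .D :: x.2.2)) ?_ ?_ ?_
  · rintro ⟨⟨i, j⟩, p, q⟩ hx
    simp only [coe_sigma, Set.mem_sigma_iff, mem_coe, HasAntidiagonal.mem_antidiagonal,
      mem_product, mem_pathsWith] at hx
    simp only [mem_coe, mem_pathsWith, pathLength_cons, pathLength_append]
    exact ⟨⟨p, q, rfl, hx.2.1.1, hx.2.2.1⟩, by simp only [SStep.len]; omega⟩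
  · rintro ⟨⟨i, j⟩, p, q⟩ hx ⟨⟨i', j'⟩, p', q'⟩ hx' heq
    simp only [coe_sigma, Set.mem_sigma_iff, mem_coe, HasAntidiagonal.mem_antidiagonal,
      mem_product, mem_pathsWith] at hx hx'
    simp only [List.cons.injEq, true_and] at heq
    obtain rfl := hinj p p' q q' hx.2.1.1 hx'.2.1.1 heq
    obtain rfl := List.cons.inj (List.append_cancel_left heq) |>.2
    obtain ⟨rfl, rfl⟩ : i = i' ∧ j = j' := by omega
    rfl
  · rintro l hl
    simp only [mem_coe, mem_pathsWith] at hl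
    obtain ⟨⟨p, q, rfl, hp, hq⟩, hl⟩ := hl
    obtain ⟨i, hi⟩ := hP p hp
    obtain ⟨j, hj⟩ := hQ q hq
    refine ⟨⟨⟨i, j⟩, p, q⟩, ?_, rfl⟩
    simp only [coe_sigma, Set.mem_sigma_iff, mem_coe, HasAntidiagonal.mem_antidiagonal,
      mem_product, mem_pathsWith]
    simp only [pathLength_cons, SStep.len, pathLength_append] at hl
    exact ⟨by omega, ⟨hp, by omega⟩, ⟨hq, by omega⟩⟩

lemma pathSeries_arch (hP : ∀ p, P p → 2 ∣ pathLength p) (hQ : ∀ q, Q q → 2 ∣ pathLength q)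
    (hinj : ∀ p₁ p₂ q₁ q₂, P p₁ → P p₂ → p₁ ++ .D :: q₁ = p₂ ++ .D :: q₂ → p₁ = p₂) :
    pathSeries (fun l => ∃ p q, l = .U :: (p ++ .D :: q) ∧ P p ∧ Q q) =
      X * (pathSeries P * pathSeries Q) := by
  ext (_ | n)
  · rw [coeff_zero_X_mul, pathSeries, coeff_mk,
      pathsWith_zero_eq_empty (by rintro _ ⟨_, _, rfl, -⟩; simp), card_empty, Nat.cast_zero]
  · rw [coeff_succ_X_mul]
    simp [pathSeries, coeff_mul, card_pathsWith_arch hP hQ hinj]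

end pathSeries

lemma pathSeries_isArchInterior (m : ℕ) :
    pathSeries (IsArchInterior m) =
      1 + X * (pathSeries (IsArchInterior (m - 1)) * pathSeries (IsLowHPath m 0)) := by
  refine (pathSeries_congr fun _ => isArchInterior_iff).trans ?_
  rw [pathSeries_or, pathSeries_eq_nil, pathSeries_arch]
  · exact fun p hp => by simpa using hp.1.two_dvd_pathLength_add
  · exact fun q hq => by simpa using hq.two_dvd_pathLength_add
  · exact fun p₁ p₂ q₁ q₂ hp₁ hp₂ => hp₁.1.eq_of_append_D hp₂.1
  · rintro _ rfl ⟨p, q, h, -⟩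
    simp at h

lemma pathSeries_isLowHPath_succ (m : ℕ) :
    pathSeries (IsLowHPath (m + 1) 0) =
      pathSeries (IsArchInterior (m + 1)) + X * pathSeries (IsLowHPath (m + 1) 0) := by
  refine (pathSeries_congr fun _ => isLowHPath_zero_iff).trans ?_
  rw [pathSeries_or, pathSeries_cons_H]
  rintro _ ⟨-, h⟩ ⟨t, rfl, -⟩
  simp at h

lemma pathSeries_isLowHPath_zero :
    pathSeries (IsLowHPath 0 0) = catalanSeries.map (Nat.castRingHom ℚ) := by
  refine eq_of_eq_one_add_X_mul_sq ?_ (map_catalanSeries_eq_one_add_X_mul_sq ℚ)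
  simpa [isArchInterior_zero, sq] using pathSeries_isArchInterior 0

lemma pathSeries_isLowHPath_two_mul_eq_one :
    pathSeries (IsLowHPath 2 0) * (1 - X) * (2 - catalanSeries.map (Nat.castRingHom ℚ)) = 1 := by
  set C := catalanSeries.map (Nat.castRingHom ℚ)
  set G₁ := pathSeries (IsLowHPath 1 0)
  set G₂ := pathSeries (IsLowHPath 2 0)
  have hC : C = 1 + X * C ^ 2 := map_catalanSeries_eq_one_add_X_mul_sq ℚ
  have hN₁ : pathSeries (IsArchInterior 1) = 1 + X * (C * G₁) := by
    simpa [isArchInterior_zero, pathSeries_isLowHPath_zero] using pathSeries_isArchInterior 1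
  have hN₂ : pathSeries (IsArchInterior 2) = 1 + X * (pathSeries (IsArchInterior 1) * G₂) :=
    pathSeries_isArchInterior 2
  have hG₁ : G₁ = pathSeries (IsArchInterior 1) + X * G₁ := pathSeries_isLowHPath_succ 0
  have hG₂ : G₂ = pathSeries (IsArchInterior 2) + X * G₂ := pathSeries_isLowHPath_succ 1
  -- Multiplied by `1 - X - X * C`, both sides become `X`.
  have hXG₁ : X * G₁ = C - 1 := by
    have hu : IsUnit (1 - X - X * C) := isUnit_iff_constantCoeff.2 (by simp)
    refine sub_eq_zero.1 (hu.mul_left_eq_zero.1 ?_)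
    linear_combination X * hG₁ + X * hN₁ - hC
  linear_combination hG₂ + hN₂ + G₂ * (1 - X) * hXG₁ - G₂ * X * hG₁

lemma coeff_pathSeries_isLowHPath_two (n : ℕ) :
    coeff n (pathSeries (IsLowHPath 2 0)) =
      (1 + ∑ i ∈ range (n + 1), ((2 * i).choose i : ℚ)) / 2 := by
  have h : C 2 * pathSeries (IsLowHPath 2 0) * (1 - X) = 1 + centralBinomSeries ℚ := by
    refine sub_eq_zero.1 ((isUnit_two_sub_map_catalanSeries ℚ).mul_left_eq_zero.1 ?_)
    rw [map_ofNat]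
    linear_combination 2 * pathSeries_isLowHPath_two_mul_eq_one -
      one_add_centralBinomSeries_mul_two_sub_map_catalanSeries ℚ
  have := coeff_eq_sum_range_of_mul_one_sub_X h n
  rw [coeff_C_mul] at this
  simp only [centralBinomSeries, Nat.centralBinom_eq_two_mul_choose, map_add, coeff_one, coeff_mk,
    sum_add_distrib, sum_ite_eq', mem_range, Nat.zero_lt_succ, ↓reduceIte] at this
  linarith

@[simp] lemma sHeight_zero (L : List SStep) : sHeight L 0 = 0 := by simp [sHeight]

@[simp] lemma sHeight_cons_succ (s : SStep) (L : List SStep) (i : ℕ) :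
    sHeight (s :: L) (i + 1) = s.eff + sHeight L i := by simp [sHeight]

lemma isLowHPath_iff {m h : ℕ} {L : List SStep} :
    IsLowHPath m h L ↔ (h : ℤ) + (L.map SStep.eff).sum = 0 ∧ ∀ i, 0 ≤ h + sHeight L i ∧
      ¬ (L[i]? = some .U ∧ L[i + 1]? = some .H) ∧ (L[i]? = some .H → h + sHeight L i < m) := by
  induction L generalizing h with
  | nil => simp [IsLowHPath, sHeight]
  | cons s L ih =>
    rw [← Nat.and_forall_add_one]
    cases s
    · simp [IsLowHPath, ih, add_assoc, List.head?_eq_getElem?, and_left_comm]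
    · rcases h with _ | h
      · simpa [IsLowHPath] using fun _ => ⟨0, by simp⟩
      · simp [IsLowHPath, ih, add_nonneg]
    · simp [IsLowHPath, ih, and_left_comm]

lemma mem_pathsWith_isLowHPath_two_iff (n : ℕ) (L : List SStep) :
    (IsSchroder L n ∧ UHFree L ∧ ∀ i, L[i]? = some .H → sHeight L i ≤ 1) ↔
      L ∈ pathsWith (IsLowHPath 2 0) n := by
  have hlt (x : ℤ) : x < 2 ↔ x ≤ 1 := by omega
  simp only [mem_pathsWith, isLowHPath_iff, IsSchroder, UHFree, pathLength, forall_and,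
    Nat.cast_zero, zero_add, Nat.cast_ofNat, hlt]
  tauto

/-- For every integer `n ≥ 0`, the number of UH-free Schröder paths of length `2n` having
no horizontal step of height greater than `1` equals `(1/2) * (1 + ∑_{i=0}^{n} C(2i, i))`. -/
theorem stmt8 (n : ℕ) :
    (Nat.card {L : List SStep // IsSchroder L n ∧ UHFree L ∧
        ∀ i, L[i]? = some SStep.H → sHeight L i ≤ 1} : ℚ) =
    (1 + ∑ i ∈ Finset.range (n + 1), ((2 * i).choose i : ℚ)) / 2 := by
  rw [Nat.card_congr (Equiv.subtypeEquivRight (mem_pathsWith_isLowHPath_two_iff n)),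
    Nat.card_eq_finsetCard, ← coeff_pathSeries_isLowHPath_two, pathSeries, coeff_mk]
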